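/- Let H be a Hilbert space, C a bounded normal operator on H, and A a bounded selfadjoint operator on H commuting with C. Equip H × H with the indefinite inner product [(x₁,y₁),(x₂,y₂)] = (x₁,x₂) − (y₁,y₂). Then the block operator matrix 𝒜 = [[0, C],[−C, −AC]] is a normal operator in the Krein space (H × H, [·,·]), i.e. 𝒜𝒜⁺ = 𝒜⁺𝒜, where 𝒜⁺ = [[0, C*],[−C*, −AC*]] is its Krein space adjoint. -/

import Mathlib

/-!
Taking adjoints in `AC = CA` and using `A* = A` gives `AC* = C*A`. Then `C`, `C*` and `A` commute
pairwise, and both products `𝒜𝒜⁺` and `𝒜⁺𝒜` are the same block matrix of polynomials in them,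
symmetric under `C ↔ C*`.
-/

open ContinuousLinearMap
open scoped InnerProductSpace

/-- The block operator matrix `[[0, C], [−C, −AC]]` on `H × H`,
sending `(x, y)` to `(C y, −C x − A (C y))`. -/
noncomputable def blockOp {H : Type*} [NormedAddCommGroup H] [InnerProductSpace ℂ H]
    (C A : H →L[ℂ] H) : H × H →L[ℂ] H × H :=
  (C.comp (ContinuousLinearMap.snd ℂ H H)).prod
    ((-(C.comp (ContinuousLinearMap.fst ℂ H H))) -
      (A.comp (C.comp (ContinuousLinearMap.snd ℂ H H))))

section BlockOp

variable {H : Type*} [NormedAddCommGroup H] [InnerProductSpace ℂ H]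

noncomputable def kreinInner (u v : H × H) : ℂ := ⟪u.1, v.1⟫_ℂ - ⟪u.2, v.2⟫_ℂ

@[simp]
lemma blockOp_apply_fst (C A : H →L[ℂ] H) (u : H × H) : (blockOp C A u).1 = C u.2 := rfl

@[simp]
lemma blockOp_apply_snd (C A : H →L[ℂ] H) (u : H × H) :
    (blockOp C A u).2 = -C u.1 - A (C u.2) := rfl

lemma blockOp_comp_comm {C D A : H →L[ℂ] H} (hCD : Commute C D) (hAC : Commute A C)
    (hAD : Commute A D) : (blockOp C A).comp (blockOp D A) = (blockOp D A).comp (blockOp C A) := by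
  have hCD' (x : H) : C (D x) = D (C x) := congr($hCD x)
  have hAC' (x : H) : A (C x) = C (A x) := congr($hAC x)
  have hAD' (x : H) : A (D x) = D (A x) := congr($hAD x)
  ext u <;> simp only [comp_apply, blockOp_apply_fst, blockOp_apply_snd, map_neg, map_sub,
    hCD', hAC', hAD']

variable [CompleteSpace H]

lemma kreinInner_blockOp_left {C A : H →L[ℂ] H} (hA : IsSelfAdjoint A)
    (hAC : Commute A (adjoint C)) (u v : H × H) :
    kreinInner (blockOp C A u) v = kreinInner u (blockOp (adjoint C) A v) := by
  have hAC_inner : ⟪A (C u.2), v.2⟫_ℂ = ⟪u.2, A (adjoint C v.2)⟫_ℂ :=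
    calc ⟪A (C u.2), v.2⟫_ℂ = ⟪u.2, adjoint C (A v.2)⟫_ℂ := by
          rw [adjoint_inner_right]; exact hA.isSymmetric _ _
      _ = ⟪u.2, A (adjoint C v.2)⟫_ℂ := congr(⟪u.2, $hAC.eq.symm v.2⟫_ℂ)
  simp only [kreinInner, blockOp_apply_fst, blockOp_apply_snd, inner_sub_left, inner_neg_left,
    inner_sub_right, inner_neg_right, ← adjoint_inner_right, hAC_inner]
  ring

end BlockOp

/-- For a bounded normal `C` and a bounded selfadjoint `A` commuting with
`C` on a Hilbert space `H`, endow `H × H` with the Krein inner product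
`[(x₁,y₁),(x₂,y₂)] = ⟪x₁,x₂⟫ − ⟪y₁,y₂⟫`. Then `𝒜 = [[0, C],[−C, −AC]]` has Krein adjoint
`𝒜⁺ = [[0, C*],[−C*, −AC*]]` (i.e. `[𝒜u, v] = [u, 𝒜⁺v]`) and is normal: `𝒜𝒜⁺ = 𝒜⁺𝒜`. -/
theorem stmt15 {H : Type*} [NormedAddCommGroup H] [InnerProductSpace ℂ H] [CompleteSpace H]
    (C A : H →L[ℂ] H) (hC : C * adjoint C = adjoint C * C)
    (hA : IsSelfAdjoint A) (hAC : A * C = C * A) :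
    (∀ u v : H × H,
      ⟪(blockOp C A u).1, v.1⟫_ℂ - ⟪(blockOp C A u).2, v.2⟫_ℂ =
        ⟪u.1, (blockOp (adjoint C) A v).1⟫_ℂ - ⟪u.2, (blockOp (adjoint C) A v).2⟫_ℂ) ∧
    (blockOp C A).comp (blockOp (adjoint C) A) =
      (blockOp (adjoint C) A).comp (blockOp C A) := by
  have hAC' : Commute A (adjoint C) := by
    simpa only [hA.star_eq, star_eq_adjoint] using Commute.star_star hAC
  exact ⟨kreinInner_blockOp_left hA hAC', blockOp_comp_comm hC hAC hAC'⟩
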